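/- arXiv:2507.11826 — 2 statements merged into one kernel-verified Lean document; each statement's English description precedes it below -/
import Mathlib

section
/- Let N ≥ 1 and m ≥ 1. Set η(ξ) := ξ^N [log(e + 1/ξ)]^{N/2} for ξ > 0 and η(0) := 0, and C_η := ∫_0^1 s η(s)^{m−1} ds. Let γ : [0,1] → [0,1] be a C¹ function with γ(0) = 0, γ(1) = 1, γ' > 0, satisfying ∫_0^{γ(ξ)} s η(s)^{m−1} ds = C_η ξ for all ξ ∈ [0,1]. Then there exist constants c₁, c₂ > 0 depending only on N and m such that c₁ ξ ≤ γ(ξ)² η(γ(ξ))^{m−1} ≤ c₂ ξ for all ξ ∈ [0,1]. -/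
open Set

noncomputable section

/-- `η(ξ) = ξ^N [log(e+1/ξ)]^{N/2}` (with `η(0) = 0`). -/
def eta (N : ℕ) (ξ : ℝ) : ℝ := ξ ^ (N : ℝ) * Real.log (Real.exp 1 + 1 / ξ) ^ ((N : ℝ) / 2)

/-- The hypotheses on the function `γ` of Section 4: `γ : [0,1] → [0,1]` is `C¹`,
increasing, `γ(0) = 0`, `γ(1) = 1`, and `∫_0^{γ(ξ)} s η(s)^{m-1} ds = C_η ξ` with
`C_η = ∫_0^1 s η(s)^{m-1} ds`. -/
def GammaFun (N : ℕ) (m : ℝ) (γ : ℝ → ℝ) : Prop :=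
  ContDiffOn ℝ 1 γ (Icc 0 1) ∧ γ 0 = 0 ∧ γ 1 = 1 ∧
  (∀ ξ ∈ Icc (0 : ℝ) 1, γ ξ ∈ Icc (0 : ℝ) 1) ∧
  (∀ ξ ∈ Icc (0 : ℝ) 1, 0 < derivWithin γ (Icc 0 1) ξ) ∧
  (∀ ξ ∈ Icc (0 : ℝ) 1,
    ∫ s in (0 : ℝ)..(γ ξ), s * eta N s ^ (m - 1) =
      (∫ s in (0 : ℝ)..1, s * eta N s ^ (m - 1)) * ξ)

namespace S15

lemma log_ge_one {s : ℝ} (hs : 0 ≤ s) : 1 ≤ Real.log (Real.exp 1 + 1 / s) := by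
  rcases eq_or_lt_of_le hs with h | h
  · simp [← h]
  · have h1 : Real.exp 1 ≤ Real.exp 1 + 1 / s := le_add_of_nonneg_right (by positivity)
    calc (1 : ℝ) = Real.log (Real.exp 1) := (Real.log_exp 1).symm
      _ ≤ _ := Real.log_le_log (Real.exp_pos 1) h1

lemma eta_nonneg (N : ℕ) {s : ℝ} (hs : 0 ≤ s) : 0 ≤ eta N s :=
  mul_nonneg (Real.rpow_nonneg hs _)
    (Real.rpow_nonneg (le_trans zero_le_one (log_ge_one hs)) _)

lemma eta_pos (N : ℕ) {s : ℝ} (hs : 0 < s) : 0 < eta N s :=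
  mul_pos (Real.rpow_pos_of_pos hs _)
    (Real.rpow_pos_of_pos (lt_of_lt_of_le one_pos (log_ge_one hs.le)) _)

lemma eta_eq (N : ℕ) {s : ℝ} (hs : 0 ≤ s) :
    eta N s = (s ^ 2 * Real.log (Real.exp 1 + 1 / s)) ^ ((N : ℝ) / 2) := by
  have hL : (0:ℝ) ≤ Real.log (Real.exp 1 + 1 / s) := le_trans zero_le_one (log_ge_one hs)
  rw [Real.mul_rpow (sq_nonneg s) hL, eta]
  congr 1
  rw [← Real.rpow_natCast s 2, ← Real.rpow_mul hs]
  congr 1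
  ring

lemma eta_mono (N : ℕ) {s y : ℝ} (hs : 0 < s) (hsy : s ≤ y) : eta N s ≤ eta N y := by
  have hy : 0 < y := hs.trans_le hsy
  set Ls := Real.log (Real.exp 1 + 1 / s) with hLs
  set Ly := Real.log (Real.exp 1 + 1 / y) with hLy
  have hLy1 : 1 ≤ Ly := log_ge_one hy.le
  have hys : 1 ≤ y / s := (one_le_div hs).mpr hsy
  have h1 : Real.exp 1 + 1 / s ≤ (Real.exp 1 + 1 / y) * (y / s) := by
    have : 1 / s = 1 / y * (y / s) := by field_simp
    rw [this, add_mul]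
    have := Real.exp_pos 1
    nlinarith
  have h2 : Ls ≤ Ly * (1 + Real.log (y / s)) := by
    have hlyx : 0 ≤ Real.log (y / s) := Real.log_nonneg hys
    calc Ls ≤ Real.log ((Real.exp 1 + 1 / y) * (y / s)) :=
          Real.log_le_log (by positivity) h1
      _ = Ly + Real.log (y / s) := Real.log_mul (by positivity) (by positivity)
      _ ≤ Ly * (1 + Real.log (y / s)) := by nlinarith
  have h3 : s ^ 2 * (1 + Real.log (y / s)) ≤ y ^ 2 := by
    have hlog : Real.log (y / s) ≤ y / s - 1 := Real.log_le_sub_one_of_pos (by positivity)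
    have : s ^ 2 * (y / s) = s * y := by field_simp
    nlinarith
  have key : s ^ 2 * Ls ≤ y ^ 2 * Ly := by nlinarith [sq_nonneg s, Real.log_nonneg hys]
  rw [eta_eq N hs.le, eta_eq N hy.le]
  exact Real.rpow_le_rpow (by nlinarith [log_ge_one hs.le]) key (by positivity)

lemma eta_zero (N : ℕ) (hN : 1 ≤ N) : eta N 0 = 0 := by
  rw [eta, Real.zero_rpow (Nat.cast_ne_zero.mpr (by omega)), zero_mul]

lemma eta_doubling (N : ℕ) {y : ℝ} (hy : 0 < y) : eta N y ≤ 2 ^ (N : ℝ) * eta N (y / 2) := by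
  have h2 : (0:ℝ) < 2 := two_pos
  have hy2 : 0 < y / 2 := by positivity
  have hL : Real.log (Real.exp 1 + 1 / y) ≤ Real.log (Real.exp 1 + 1 / (y / 2)) := by
    apply Real.log_le_log (by positivity)
    have : 1 / y ≤ 1 / (y / 2) := by
      apply one_div_le_one_div_of_le hy2; linarith
    linarith
  have hpow : y ^ (N : ℝ) = 2 ^ (N : ℝ) * (y / 2) ^ (N : ℝ) := by
    rw [← Real.mul_rpow (by norm_num) hy2.le]
    congr 1
    ring
  calc eta N y
      = 2 ^ (N:ℝ) * ((y/2) ^ (N:ℝ) * Real.log (Real.exp 1 + 1 / y) ^ ((N:ℝ)/2)) := by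
        rw [eta, hpow]; ring
    _ ≤ 2 ^ (N:ℝ) * ((y/2) ^ (N:ℝ) * Real.log (Real.exp 1 + 1 / (y/2)) ^ ((N:ℝ)/2)) := by
        apply mul_le_mul_of_nonneg_left _ (by positivity)
        apply mul_le_mul_of_nonneg_left _ (Real.rpow_nonneg hy2.le _)
        exact Real.rpow_le_rpow (le_trans zero_le_one (log_ge_one hy.le)) hL (by positivity)
    _ = 2 ^ (N:ℝ) * eta N (y/2) := rfl


def f (N : ℕ) (m : ℝ) (s : ℝ) : ℝ := s * eta N s ^ (m - 1)

lemma f_nonneg (N : ℕ) (m : ℝ) {s : ℝ} (hs : 0 ≤ s) : 0 ≤ f N m s :=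
  mul_nonneg hs (Real.rpow_nonneg (eta_nonneg N hs) _)

lemma f_mono (N : ℕ) (m : ℝ) (hm : 1 ≤ m) : MonotoneOn (f N m) (Ici 0) := by
  intro s hs t ht hst
  simp only [mem_Ici] at hs ht
  rcases eq_or_lt_of_le hs with h | h
  · rw [f, ← h, zero_mul]; exact f_nonneg N m ht
  · exact mul_le_mul hst
      (Real.rpow_le_rpow (eta_nonneg N h.le) (eta_mono N h hst) (by linarith))
      (Real.rpow_nonneg (eta_nonneg N h.le) _) ht

lemma f_int (N : ℕ) (m : ℝ) (hm : 1 ≤ m) {a b : ℝ} (ha : 0 ≤ a) (hab : a ≤ b) :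
    IntervalIntegrable (f N m) MeasureTheory.volume a b := by
  apply MonotoneOn.intervalIntegrable
  apply (f_mono N m hm).mono
  rw [uIcc_of_le hab]
  intro x hx
  exact le_trans ha hx.1

lemma F_le (N : ℕ) (m : ℝ) (hm : 1 ≤ m) {y : ℝ} (hy : 0 ≤ y) :
    (∫ s in (0:ℝ)..y, f N m s) ≤ y * f N m y := by
  have := intervalIntegral.integral_mono_on hy (f_int N m hm le_rfl hy)
    (intervalIntegrable_const (c := f N m y))
    (fun x hx => f_mono N m hm (mem_Ici.mpr hx.1) (mem_Ici.mpr hy) hx.2)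
  simpa using this

lemma F_ge (N : ℕ) (m : ℝ) (hm : 1 ≤ m) {y : ℝ} (hy : 0 ≤ y) :
    y / 2 * f N m (y / 2) ≤ ∫ s in (0:ℝ)..y, f N m s := by
  have hy2 : (0:ℝ) ≤ y / 2 := by linarith
  have hsplit := intervalIntegral.integral_add_adjacent_intervals
    (f_int N m hm le_rfl hy2) (f_int N m hm (b := y) hy2 (by linarith))
  have h1 : (0:ℝ) ≤ ∫ s in (0:ℝ)..y/2, f N m s :=
    intervalIntegral.integral_nonneg hy2 (fun x hx => f_nonneg N m hx.1)
  have h2 : y / 2 * f N m (y / 2) ≤ ∫ s in (y/2 : ℝ)..y, f N m s := by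
    have hc := intervalIntegral.integral_mono_on (by linarith : y/2 ≤ y)
      (intervalIntegrable_const (c := f N m (y/2))) (f_int N m hm hy2 (by linarith))
      (fun x hx => f_mono N m hm (mem_Ici.mpr hy2) (mem_Ici.mpr (le_trans hy2 hx.1)) hx.1)
    rwa [intervalIntegral.integral_const, smul_eq_mul,
      show y - y/2 = y/2 by ring] at hc
  linarith [hsplit]

end S15

open S15 in
/-- the two-sided bound `γ(ξ)² η(γ(ξ))^{m-1} ≍ ξ`, see (4.2). -/
theorem statement15 (N : ℕ) (hN : 1 ≤ N) (m : ℝ) (hm : 1 ≤ m) :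
    ∃ c₁ c₂ : ℝ, 0 < c₁ ∧ 0 < c₂ ∧
      ∀ γ : ℝ → ℝ, GammaFun N m γ →
        ∀ ξ ∈ Icc (0 : ℝ) 1,
          c₁ * ξ ≤ γ ξ ^ 2 * eta N (γ ξ) ^ (m - 1) ∧
          γ ξ ^ 2 * eta N (γ ξ) ^ (m - 1) ≤ c₂ * ξ := by
  set C : ℝ := ∫ s in (0:ℝ)..1, f N m s with hC
  set K : ℝ := (2 ^ (N:ℝ)) ^ (m - 1) with hK
  have hKpos : 0 < K := Real.rpow_pos_of_pos (Real.rpow_pos_of_pos two_pos _) _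
  have hCpos : 0 < C := by
    have h1 := F_ge N m hm (y := 1) zero_le_one
    have h2 : 0 < f N m (1/2 : ℝ) :=
      mul_pos (by norm_num) (Real.rpow_pos_of_pos (eta_pos N (by norm_num)) _)
    calc (0:ℝ) < 1/2 * f N m ((1:ℝ)/2) := by positivity
      _ ≤ C := by rw [hC]; convert h1 using 3 <;> norm_num
  refine ⟨C, 4 * K * C, hCpos, by positivity, ?_⟩
  rintro γ ⟨-, h0, -, hrange, -, hint⟩ ξ hξ
  have hy01 := hrange ξ hξ
  set y := γ ξ with hy
  have heq : (∫ s in (0:ℝ)..y, f N m s) = C * ξ := hint ξ hξ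
  rcases eq_or_lt_of_le hξ.1 with hξ0 | hξ0
  · have hy0 : y = 0 := by rw [hy, ← hξ0, h0]
    rw [← hξ0, hy0]
    norm_num
  · have hFpos : 0 < ∫ s in (0:ℝ)..y, f N m s := by
      rw [heq]; positivity
    have hypos : 0 < y := by
      rcases eq_or_lt_of_le hy01.1 with h | h
      · exfalso; rw [← h] at hFpos; simp at hFpos
      · exact h
    constructor
    · have hle := F_le N m hm hy01.1
      have : f N m y = y * eta N y ^ (m-1) := rfl
      nlinarith [heq]
    · have hdb := eta_doubling N hypos
      have hr : eta N y ^ (m-1) ≤ K * eta N (y/2) ^ (m-1) := by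
        calc eta N y ^ (m-1) ≤ (2 ^ (N:ℝ) * eta N (y/2)) ^ (m-1) :=
              Real.rpow_le_rpow (eta_nonneg N hypos.le) hdb (by linarith)
          _ = K * eta N (y/2) ^ (m-1) :=
              Real.mul_rpow (by positivity) (eta_nonneg N (by linarith))
      have hFg : y/2 * f N m (y/2) ≤ C * ξ := heq ▸ F_ge N m hm hypos.le
      have hf2 : f N m (y/2) = y/2 * eta N (y/2) ^ (m-1) := rfl
      calc y ^ 2 * eta N y ^ (m-1)
          ≤ y ^ 2 * (K * eta N (y/2) ^ (m-1)) :=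
            mul_le_mul_of_nonneg_left hr (sq_nonneg y)
        _ = (4 * K) * (y/2 * (y/2 * eta N (y/2) ^ (m-1))) := by ring
        _ ≤ (4 * K) * (C * ξ) := by
            apply mul_le_mul_of_nonneg_left _ (by positivity)
            rw [← hf2]; exact hFg
        _ = 4 * K * C * ξ := by ring
end
end

section
/- Let N ≥ 1, m ≥ 1, and p = p_m := m + 2/N. Set η(ξ) := ξ^N [log(e + 1/ξ)]^{N/2} for ξ > 0 and η(0) := 0, and C_η := ∫_0^1 s η(s)^{m−1} ds. Let γ : [0,1] → [0,1] be a C¹ function with γ(0) = 0, γ(1) = 1, γ' > 0, satisfying ∫_0^{γ(ξ)} s η(s)^{m−1} ds = C_η ξ for all ξ ∈ [0,1]. Then there exist positive constants (depending only on N and m) such that for all ξ ∈ [0,1]: (i) γ(ξ) ≍ γ(ξ/2) and η(γ(ξ)) ≍ η(γ(ξ/2)); (ii) η(γ(ξ)) ≥ c ξ^{1/(p−1)} for some c > 0; (iii) ∫_0^ξ η(γ(s))^{−(m−1)} ds ≍ γ(ξ)². Here f(ξ) ≍ g(ξ) means there are constants C', C'' > 0 with C' g(ξ) ≤ f(ξ)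 ≤ C'' g(ξ) for all ξ in the stated range. -/
open Set

noncomputable section

/-!
Write `F(u) = ∫₀ᵘ s η(s)^{m-1} ds`. Since the integrand is increasing, `F(u) ≤ u² η(u)^{m-1} / 2`,
and integrating over `[u/2, u]` together with the doubling bound `η(2ξ) ≤ 2^N η(ξ)` gives
`F(u) ≳ u² η(u)^{m-1}`. The defining relation `F(γ ξ) = C_η ξ` therefore makes `γ(ξ)² η(γ ξ)^{m-1}`
comparable to `ξ`; halving `ξ` yields (4.3), and `u² ≤ η(u)^{2/N}` yields `η(γ ξ)^{p-1} ≥ 2 C_η ξ`,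
i.e. (4.4). Differentiating `F(γ s) = C_η s` gives `η(γ s)^{-(m-1)} = γ(s) γ'(s) / C_η`, so the
integral in (4.5) is exactly `γ(ξ)² / (2 C_η)`.
-/

open Real intervalIntegral MeasureTheory

lemma one_le_log_exp_one_add_one_div {ξ : ℝ} (hξ : 0 ≤ ξ) : 1 ≤ log (exp 1 + 1 / ξ) :=
  (le_log_iff_exp_le (by positivity)).2 (le_add_of_nonneg_right (by positivity))

lemma log_exp_one_add_one_div_pos {ξ : ℝ} (hξ : 0 ≤ ξ) : 0 < log (exp 1 + 1 / ξ) :=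
  zero_lt_one.trans_le (one_le_log_exp_one_add_one_div hξ)

lemma sq_mul_log_exp_one_add_one_div_monotoneOn :
    MonotoneOn (fun ξ : ℝ => ξ ^ 2 * log (exp 1 + 1 / ξ)) (Ici 0) := by
  intro a (ha : 0 ≤ a) b (hb : 0 ≤ b) hab
  have hLb := one_le_log_exp_one_add_one_div hb
  rcases ha.eq_or_lt with rfl | ha0
  · simp only [ne_eq, OfNat.ofNat_ne_zero, not_false_eq_true, zero_pow, zero_mul]
    positivity
  have hba : 1 ≤ b / a := (one_le_div ha0).2 hab
  -- `e + 1/a ≤ (b/a)(e + 1/b)`, then `log (b/a) ≤ b/a - 1`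
  have hlog : log (exp 1 + 1 / a) ≤ b / a - 1 + log (exp 1 + 1 / b) := by
    have hmul : exp 1 + 1 / a ≤ b / a * (exp 1 + 1 / b) := by
      have : b / a * (exp 1 + 1 / b) = b / a * exp 1 + 1 / a := by
        field_simp [(ha0.trans_le hab).ne']
      nlinarith [exp_pos 1]
    calc log (exp 1 + 1 / a) ≤ log (b / a * (exp 1 + 1 / b)) := log_le_log (by positivity) hmul
      _ = log (b / a) + log (exp 1 + 1 / b) := log_mul (by positivity) (by positivity)
      _ ≤ _ := by linarith [log_le_sub_one_of_pos (show 0 < b / a by positivity)]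
  calc a ^ 2 * log (exp 1 + 1 / a) ≤ a ^ 2 * (b / a - 1 + log (exp 1 + 1 / b)) := by gcongr
    _ = a * b - a ^ 2 + a ^ 2 * log (exp 1 + 1 / b) := by field_simp
    _ ≤ b ^ 2 * log (exp 1 + 1 / b) := by
      nlinarith [mul_nonneg (sub_nonneg.2 (pow_le_pow_left₀ ha hab 2)) (sub_nonneg.2 hLb),
        mul_nonneg hb (sub_nonneg.2 hab)]

lemma sq_rpow_natCast_div_two {x : ℝ} (hx : 0 ≤ x) (N : ℕ) :
    (x ^ 2) ^ ((N : ℝ) / 2) = x ^ (N : ℝ) := by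
  rw [← rpow_natCast x 2, ← rpow_mul hx]
  push_cast
  ring_nf

section Eta

variable {N : ℕ}

lemma eta_eq_rpow {ξ : ℝ} (hξ : 0 ≤ ξ) :
    eta N ξ = (ξ ^ 2 * log (exp 1 + 1 / ξ)) ^ ((N : ℝ) / 2) := by
  rw [mul_rpow (sq_nonneg ξ) (log_exp_one_add_one_div_pos hξ).le, sq_rpow_natCast_div_two hξ, eta]

lemma eta_nonneg {ξ : ℝ} (hξ : 0 ≤ ξ) : 0 ≤ eta N ξ :=
  mul_nonneg (rpow_nonneg hξ _) (rpow_nonneg (log_exp_one_add_one_div_pos hξ).le _)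

lemma eta_pos {ξ : ℝ} (hξ : 0 < ξ) : 0 < eta N ξ :=
  mul_pos (rpow_pos_of_pos hξ _) (rpow_pos_of_pos (log_exp_one_add_one_div_pos hξ.le) _)

lemma eta_monotoneOn : MonotoneOn (eta N) (Ici 0) := by
  intro a (ha : 0 ≤ a) b (hb : 0 ≤ b) hab
  rw [eta_eq_rpow ha, eta_eq_rpow hb]
  have hL := log_exp_one_add_one_div_pos ha
  exact rpow_le_rpow (by positivity) (sq_mul_log_exp_one_add_one_div_monotoneOn ha hb hab)
    (by positivity)

lemma eta_rpow_monotoneOn {m : ℝ} (hm : 1 ≤ m) :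
    MonotoneOn (fun ξ => eta N ξ ^ (m - 1)) (Ici 0) :=
  fun _ ha _ hb hab => rpow_le_rpow (eta_nonneg ha) (eta_monotoneOn ha hb hab) (by linarith)

lemma eta_mul_le {l ξ : ℝ} (hl : 1 ≤ l) (hξ : 0 ≤ ξ) :
    eta N (l * ξ) ≤ l ^ (N : ℝ) * eta N ξ := by
  have hl0 : 0 ≤ l := zero_le_one.trans hl
  have hlog : log (exp 1 + 1 / (l * ξ)) ≤ log (exp 1 + 1 / ξ) := by
    rcases hξ.eq_or_lt with rfl | hξ0
    · simp
    exact log_le_log (by positivity)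
      (by linarith [one_div_le_one_div_of_le hξ0 (le_mul_of_one_le_left hξ hl)])
  have hL := log_exp_one_add_one_div_pos hξ
  rw [eta_eq_rpow (mul_nonneg hl0 hξ), eta_eq_rpow hξ, ← sq_rpow_natCast_div_two hl0,
    ← mul_rpow (sq_nonneg l) (by positivity)]
  refine rpow_le_rpow
    (mul_nonneg (sq_nonneg _) (log_exp_one_add_one_div_pos (by positivity)).le) ?_ (by positivity)
  calc (l * ξ) ^ 2 * log (exp 1 + 1 / (l * ξ)) ≤ (l * ξ) ^ 2 * log (exp 1 + 1 / ξ) := by gcongr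
    _ = l ^ 2 * (ξ ^ 2 * log (exp 1 + 1 / ξ)) := by ring

lemma sq_le_eta_rpow (hN : N ≠ 0) {ξ : ℝ} (hξ : 0 ≤ ξ) : ξ ^ 2 ≤ eta N ξ ^ (2 / (N : ℝ)) := by
  have hL := one_le_log_exp_one_add_one_div hξ
  rw [eta_eq_rpow hξ, ← rpow_mul (by positivity), div_mul_div_comm, mul_comm (N : ℝ),
    div_self (by positivity), rpow_one]
  exact le_mul_of_one_le_right (sq_nonneg ξ) hL

lemma continuousAt_eta {ξ : ℝ} (hξ : 0 < ξ) : ContinuousAt (eta N) ξ := by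
  have hlog : ContinuousAt (fun s : ℝ => log (exp 1 + 1 / s)) ξ :=
    (continuousAt_const.add (continuousAt_const.div continuousAt_id hξ.ne')).log
      (add_pos (exp_pos 1) (one_div_pos.2 hξ)).ne'
  exact (continuousAt_id.rpow_const (Or.inl hξ.ne')).mul
    (hlog.rpow_const (Or.inr (by positivity)))

end Eta

/-- `F(u) = ∫₀ᵘ s η(s)^{m-1} ds`, so that `C_η = etaMoment N m 1`. -/
def etaMoment (N : ℕ) (m u : ℝ) : ℝ := ∫ s in (0 : ℝ)..u, s * eta N s ^ (m - 1)

section EtaMoment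

variable {N : ℕ} {m : ℝ}

lemma intervalIntegrable_mul_eta_rpow (hm : 1 ≤ m) {a b : ℝ} (ha : 0 ≤ a) (hb : 0 ≤ b) :
    IntervalIntegrable (fun s => s * eta N s ^ (m - 1)) volume a b := by
  refine MonotoneOn.intervalIntegrable fun x hx y hy hxy => ?_
  have hx0 : 0 ≤ x := (le_min ha hb).trans hx.1
  have hy0 : 0 ≤ y := hx0.trans hxy
  exact mul_le_mul hxy (eta_rpow_monotoneOn hm hx0 hy0 hxy) (rpow_nonneg (eta_nonneg hx0) _) hy0

lemma etaMoment_le (hm : 1 ≤ m) {u : ℝ} (hu : 0 ≤ u) :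
    etaMoment N m u ≤ u ^ 2 / 2 * eta N u ^ (m - 1) := by
  calc etaMoment N m u ≤ ∫ s in (0 : ℝ)..u, s * eta N u ^ (m - 1) :=
        integral_mono_on hu (intervalIntegrable_mul_eta_rpow hm le_rfl hu)
          ((continuous_id.mul continuous_const).intervalIntegrable _ _) fun s hs =>
            mul_le_mul_of_nonneg_left (eta_rpow_monotoneOn hm hs.1 hu hs.2) hs.1
    _ = u ^ 2 / 2 * eta N u ^ (m - 1) := by
        rw [intervalIntegral.integral_mul_const, integral_id]
        ring

lemma le_etaMoment (hm : 1 ≤ m) {u : ℝ} (hu : 0 ≤ u) :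
    3 / 8 * u ^ 2 * eta N u ^ (m - 1) ≤ ((2 : ℝ) ^ (N : ℝ)) ^ (m - 1) * etaMoment N m u := by
  have hu2 : 0 ≤ u / 2 := by linarith
  have hdouble : eta N u ^ (m - 1) ≤ ((2 : ℝ) ^ (N : ℝ)) ^ (m - 1) * eta N (u / 2) ^ (m - 1) := by
    rw [← mul_rpow (by positivity) (eta_nonneg hu2)]
    refine rpow_le_rpow (eta_nonneg hu) ?_ (by linarith)
    simpa [mul_div_cancel₀] using eta_mul_le (N := N) one_le_two hu2
  have hhalf : 3 / 8 * u ^ 2 * eta N (u / 2) ^ (m - 1) ≤ etaMoment N m u := by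
    calc 3 / 8 * u ^ 2 * eta N (u / 2) ^ (m - 1)
        = ∫ s in (u / 2)..u, s * eta N (u / 2) ^ (m - 1) := by
          rw [intervalIntegral.integral_mul_const, integral_id]
          ring
      _ ≤ ∫ s in (u / 2)..u, s * eta N s ^ (m - 1) :=
          integral_mono_on (by linarith)
            ((continuous_id.mul continuous_const).intervalIntegrable _ _)
            (intervalIntegrable_mul_eta_rpow hm hu2 hu) fun s hs =>
              mul_le_mul_of_nonneg_left (eta_rpow_monotoneOn hm hu2 (hu2.trans hs.1) hs.1)
                (hu2.trans hs.1)
      _ ≤ etaMoment N m u := by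
          rw [etaMoment, ← integral_add_adjacent_intervals
            (intervalIntegrable_mul_eta_rpow hm le_rfl hu2)
            (intervalIntegrable_mul_eta_rpow hm hu2 hu)]
          exact le_add_of_nonneg_left
            (integral_nonneg hu2 fun s hs => mul_nonneg hs.1 (rpow_nonneg (eta_nonneg hs.1) _))
  calc 3 / 8 * u ^ 2 * eta N u ^ (m - 1)
      ≤ 3 / 8 * u ^ 2 * (((2 : ℝ) ^ (N : ℝ)) ^ (m - 1) * eta N (u / 2) ^ (m - 1)) := by gcongr
    _ = ((2 : ℝ) ^ (N : ℝ)) ^ (m - 1) * (3 / 8 * u ^ 2 * eta N (u / 2) ^ (m - 1)) := by ring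
    _ ≤ ((2 : ℝ) ^ (N : ℝ)) ^ (m - 1) * etaMoment N m u := by gcongr

lemma etaMoment_pos (hm : 1 ≤ m) {u : ℝ} (hu : 0 < u) : 0 < etaMoment N m u := by
  have h : 0 < 3 / 8 * u ^ 2 * eta N u ^ (m - 1) := by
    have := rpow_pos_of_pos (eta_pos (N := N) hu) (m - 1)
    positivity
  exact pos_of_mul_pos_right (h.trans_le (le_etaMoment hm hu.le)) (by positivity)

lemma hasDerivAt_etaMoment (hm : 1 ≤ m) {u : ℝ} (hu : 0 < u) :
    HasDerivAt (etaMoment N m) (u * eta N u ^ (m - 1)) u := by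
  have hcont : ContinuousOn (fun s => s * eta N s ^ (m - 1)) (Ioi 0) := fun s (hs : 0 < s) =>
    (continuousAt_id.mul ((continuousAt_eta hs).rpow_const
      (Or.inl (eta_pos hs).ne'))).continuousWithinAt
  exact integral_hasDerivAt_right (intervalIntegrable_mul_eta_rpow hm le_rfl hu.le)
    (hcont.stronglyMeasurableAtFilter isOpen_Ioi u hu) (hcont.continuousAt (Ioi_mem_nhds hu))

lemma two_mul_etaMoment_le (hN : N ≠ 0) (hm : 1 ≤ m) {u : ℝ} (hu : 0 ≤ u) :
    2 * etaMoment N m u ≤ eta N u ^ (m + 2 / N - 1) := by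
  have hη := eta_nonneg (N := N) hu
  have hE := rpow_nonneg hη (m - 1)
  calc 2 * etaMoment N m u ≤ u ^ 2 * eta N u ^ (m - 1) := by
        linarith [etaMoment_le (N := N) hm hu]
    _ ≤ eta N u ^ (2 / (N : ℝ)) * eta N u ^ (m - 1) := by gcongr; exact sq_le_eta_rpow hN hu
    _ = eta N u ^ (m + 2 / N - 1) := by
        have hN0 : (0 : ℝ) < N := Nat.cast_pos.2 (Nat.pos_of_ne_zero hN)
        rw [← rpow_add' hη (add_pos_of_pos_of_nonneg (by positivity) (by linarith)).ne']
        ring_nf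

end EtaMoment

namespace GammaFun

variable {N : ℕ} {m : ℝ} {γ : ℝ → ℝ}

lemma map_zero (hγ : GammaFun N m γ) : γ 0 = 0 :=
  hγ.2.1

lemma mem_Icc (hγ : GammaFun N m γ) {ξ : ℝ} (hξ : ξ ∈ Icc (0 : ℝ) 1) : γ ξ ∈ Icc (0 : ℝ) 1 :=
  hγ.2.2.2.1 ξ hξ

lemma etaMoment_eq (hγ : GammaFun N m γ) {ξ : ℝ} (hξ : ξ ∈ Icc (0 : ℝ) 1) :
    etaMoment N m (γ ξ) = etaMoment N m 1 * ξ :=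
  hγ.2.2.2.2.2 ξ hξ

lemma hasDerivAt (hγ : GammaFun N m γ) {s : ℝ} (hs : s ∈ Ioo (0 : ℝ) 1) :
    HasDerivAt γ (deriv γ s) s :=
  ((hγ.1.differentiableOn one_ne_zero).differentiableAt (Icc_mem_nhds hs.1 hs.2)).hasDerivAt

lemma strictMonoOn (hγ : GammaFun N m γ) : StrictMonoOn γ (Icc 0 1) := by
  refine strictMonoOn_of_deriv_pos (convex_Icc 0 1) hγ.1.continuousOn fun x hx => ?_
  rw [interior_Icc] at hx
  simpa only [derivWithin_of_mem_nhds (Icc_mem_nhds hx.1 hx.2)] using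
    hγ.2.2.2.2.1 x (Ioo_subset_Icc_self hx)

lemma pos (hγ : GammaFun N m γ) {ξ : ℝ} (hξ : ξ ∈ Ioc (0 : ℝ) 1) : 0 < γ ξ := by
  simpa only [hγ.map_zero] using
    hγ.strictMonoOn (left_mem_Icc.2 zero_le_one) (Ioc_subset_Icc_self hξ) hξ.1

lemma mul_eta_rpow_mul_deriv (hm : 1 ≤ m) (hγ : GammaFun N m γ) {s : ℝ}
    (hs : s ∈ Ioo (0 : ℝ) 1) :
    γ s * eta N (γ s) ^ (m - 1) * deriv γ s = etaMoment N m 1 := by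
  have hcomp := (hasDerivAt_etaMoment (N := N) hm (hγ.pos (Ioo_subset_Ioc_self hs))).comp s
    (hγ.hasDerivAt hs)
  have hlin : etaMoment N m ∘ γ =ᶠ[nhds s] fun t => etaMoment N m 1 * t :=
    Filter.eventuallyEq_of_mem (Icc_mem_nhds hs.1 hs.2) fun t ht => hγ.etaMoment_eq ht
  exact hcomp.unique
    (by simpa using ((hasDerivAt_id s).const_mul (etaMoment N m 1)).congr_of_eventuallyEq hlin)

lemma hasDerivAt_sq_div (hm : 1 ≤ m) (hγ : GammaFun N m γ) {s : ℝ} (hs : s ∈ Ioo (0 : ℝ) 1) :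
    HasDerivAt (fun t => γ t ^ 2 / (2 * etaMoment N m 1)) (eta N (γ s) ^ (-(m - 1))) s := by
  have hγs := hγ.pos (Ioo_subset_Ioc_self hs)
  have hkey := hγ.mul_eta_rpow_mul_deriv hm hs
  have hd : deriv γ s ≠ 0 := by
    rintro hd
    rw [hd, mul_zero] at hkey
    exact (etaMoment_pos (N := N) hm one_pos).ne' hkey.symm
  refine (((hγ.hasDerivAt hs).pow 2).div_const (2 * etaMoment N m 1)).congr_deriv ?_
  rw [rpow_neg (eta_nonneg hγs.le), ← hkey]
  field_simp
  ring

lemma integral_eta_rpow_neg (hm : 1 ≤ m) (hγ : GammaFun N m γ) {ξ : ℝ}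
    (hξ : ξ ∈ Icc (0 : ℝ) 1) :
    ∫ s in (0 : ℝ)..ξ, eta N (γ s) ^ (-(m - 1)) = γ ξ ^ 2 / (2 * etaMoment N m 1) := by
  have hcont : ContinuousOn (fun t => γ t ^ 2 / (2 * etaMoment N m 1)) (Icc 0 ξ) :=
    ((hγ.1.continuousOn.mono (Icc_subset_Icc_right hξ.2)).pow 2).div_const _
  have hderiv : ∀ s ∈ Ioo 0 ξ, HasDerivAt (fun t => γ t ^ 2 / (2 * etaMoment N m 1))
      (eta N (γ s) ^ (-(m - 1))) s :=
    fun s hs => hγ.hasDerivAt_sq_div hm ⟨hs.1, hs.2.trans_le hξ.2⟩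
  have hint : IntervalIntegrable (fun s => eta N (γ s) ^ (-(m - 1))) volume 0 ξ := by
    refine intervalIntegrable_deriv_of_nonneg (by rwa [uIcc_of_le hξ.1])
      (by rwa [min_eq_left hξ.1, max_eq_right hξ.1]) fun s hs => ?_
    rw [min_eq_left hξ.1, max_eq_right hξ.1] at hs
    exact rpow_nonneg (eta_nonneg (hγ.mem_Icc ⟨hs.1.le, hs.2.le.trans hξ.2⟩).1) _
  rw [integral_eq_sub_of_hasDerivAt_of_le hξ.1 hcont hderiv hint, hγ.map_zero]
  ring

lemma le_mul_half (hm : 1 ≤ m) (hγ : GammaFun N m γ) {ξ : ℝ} (hξ : ξ ∈ Icc (0 : ℝ) 1) :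
    γ ξ ≤ 2 * ((2 : ℝ) ^ (N : ℝ)) ^ (m - 1) * γ (ξ / 2) := by
  set K := ((2 : ℝ) ^ (N : ℝ)) ^ (m - 1)
  have hK : 1 ≤ K := one_le_rpow (one_le_rpow one_le_two (Nat.cast_nonneg N)) (by linarith)
  have hξ2 : ξ / 2 ∈ Icc (0 : ℝ) 1 := ⟨by linarith [hξ.1], by linarith [hξ.2]⟩
  have h0 := (hγ.mem_Icc hξ).1
  have h0' := (hγ.mem_Icc hξ2).1
  rcases hξ.1.eq_or_lt with rfl | hξ0
  · simp [hγ.map_zero]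
  have hE : 0 < eta N (γ ξ) ^ (m - 1) := rpow_pos_of_pos (eta_pos (hγ.pos ⟨hξ0, hξ.2⟩)) _
  have hmono : eta N (γ (ξ / 2)) ^ (m - 1) ≤ eta N (γ ξ) ^ (m - 1) :=
    eta_rpow_monotoneOn hm h0' h0 (hγ.strictMonoOn.monotoneOn hξ2 hξ (by linarith))
  -- `F(γ ξ) = 2 F(γ (ξ/2))`, squeezed between the two-sided bounds on `F`
  have hsq : 3 * γ ξ ^ 2 * eta N (γ ξ) ^ (m - 1) ≤
      8 * K * γ (ξ / 2) ^ 2 * eta N (γ ξ) ^ (m - 1) := by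
    have h1 := le_etaMoment (N := N) hm h0
    have h2 := etaMoment_le (N := N) hm h0'
    rw [hγ.etaMoment_eq hξ] at h1
    rw [hγ.etaMoment_eq hξ2] at h2
    nlinarith [mul_le_mul_of_nonneg_left h2 (by linarith : (0 : ℝ) ≤ K),
      mul_le_mul_of_nonneg_left hmono (by positivity : (0 : ℝ) ≤ K * γ (ξ / 2) ^ 2)]
  have hsq' : γ ξ ^ 2 ≤ (2 * K * γ (ξ / 2)) ^ 2 := by
    nlinarith [le_of_mul_le_mul_right hsq hE, mul_nonneg (sub_nonneg.2 hK) (sq_nonneg (γ (ξ / 2)))]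
  exact (pow_le_pow_iff_left₀ h0 (by positivity) two_ne_zero).1 hsq'

lemma eta_le_mul_half (hm : 1 ≤ m) (hγ : GammaFun N m γ) {ξ : ℝ} (hξ : ξ ∈ Icc (0 : ℝ) 1) :
    eta N (γ ξ) ≤ (2 * ((2 : ℝ) ^ (N : ℝ)) ^ (m - 1)) ^ (N : ℝ) * eta N (γ (ξ / 2)) := by
  have hK : 1 ≤ 2 * ((2 : ℝ) ^ (N : ℝ)) ^ (m - 1) := by
    linarith [one_le_rpow (one_le_rpow one_le_two (Nat.cast_nonneg N)) (by linarith : 0 ≤ m - 1)]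
  have h0 := (hγ.mem_Icc ⟨by linarith [hξ.1], by linarith [hξ.2]⟩ : γ (ξ / 2) ∈ _).1
  exact (eta_monotoneOn (hγ.mem_Icc hξ).1 (mul_nonneg (by linarith) h0)
    (hγ.le_mul_half hm hξ)).trans (eta_mul_le hK h0)

lemma rpow_mul_rpow_le_eta (hN : N ≠ 0) (hm : 1 ≤ m) (hγ : GammaFun N m γ) {ξ : ℝ}
    (hξ : ξ ∈ Icc (0 : ℝ) 1) :
    (2 * etaMoment N m 1) ^ (1 / (m + 2 / N - 1)) * ξ ^ (1 / (m + 2 / N - 1)) ≤ eta N (γ ξ) := by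
  have hN0 : (0 : ℝ) < N := Nat.cast_pos.2 (Nat.pos_of_ne_zero hN)
  have hq : 0 < m + 2 / N - 1 := by linarith [(by positivity : (0 : ℝ) < 2 / N)]
  have h0 := (hγ.mem_Icc hξ).1
  have hC := etaMoment_pos (N := N) hm one_pos
  calc (2 * etaMoment N m 1) ^ (1 / (m + 2 / N - 1)) * ξ ^ (1 / (m + 2 / N - 1))
      = (2 * etaMoment N m (γ ξ)) ^ (1 / (m + 2 / N - 1)) := by
        rw [hγ.etaMoment_eq hξ, ← mul_assoc, mul_rpow (by positivity) hξ.1]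
    _ ≤ (eta N (γ ξ) ^ (m + 2 / N - 1)) ^ (1 / (m + 2 / N - 1)) :=
        rpow_le_rpow
          (by rw [hγ.etaMoment_eq hξ]; exact mul_nonneg zero_le_two (mul_nonneg hC.le hξ.1))
          (two_mul_etaMoment_le hN hm h0) (by positivity)
    _ = eta N (γ ξ) := by
        rw [← rpow_mul (eta_nonneg h0), mul_one_div_cancel hq.ne', rpow_one]

end GammaFun

/-- Lemma 4.1: properties of the function `γ` for `p = p_m`. -/
theorem statement16 (N : ℕ) (hN : 1 ≤ N) (m : ℝ) (hm : 1 ≤ m) (p : ℝ)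
    (hp : p = m + 2 / N) :
    ∃ c C : ℝ, 0 < c ∧ 0 < C ∧
      ∀ γ : ℝ → ℝ, GammaFun N m γ →
        ∀ ξ ∈ Icc (0 : ℝ) 1,
          -- (4.3): γ(ξ) ≍ γ(ξ/2) and η(γ(ξ)) ≍ η(γ(ξ/2))
          (c * γ (ξ / 2) ≤ γ ξ ∧ γ ξ ≤ C * γ (ξ / 2)) ∧
          (c * eta N (γ (ξ / 2)) ≤ eta N (γ ξ) ∧ eta N (γ ξ) ≤ C * eta N (γ (ξ / 2))) ∧
          -- (4.4): η(γ(ξ)) ≳ ξ^{1/(p-1)}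
          c * ξ ^ (1 / (p - 1)) ≤ eta N (γ ξ) ∧
          -- (4.5): ∫_0^ξ η(γ(s))^{-(m-1)} ds ≍ γ(ξ)²
          (c * γ ξ ^ 2 ≤ ∫ s in (0 : ℝ)..ξ, eta N (γ s) ^ (-(m - 1)) ∧
            (∫ s in (0 : ℝ)..ξ, eta N (γ s) ^ (-(m - 1))) ≤ C * γ ξ ^ 2) := by
  subst hp
  set Cη := etaMoment N m 1
  set K := 2 * ((2 : ℝ) ^ (N : ℝ)) ^ (m - 1)
  set q := m + 2 / N - 1
  have hCη : 0 < Cη := etaMoment_pos hm one_pos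
  have hK : 0 < K := by positivity
  refine ⟨min 1 (min ((2 * Cη) ^ (1 / q)) (1 / (2 * Cη))), max K (max (K ^ (N : ℝ)) (1 / (2 * Cη))),
    lt_min one_pos (lt_min (rpow_pos_of_pos (mul_pos two_pos hCη) _)
      (one_div_pos.2 (mul_pos two_pos hCη))), lt_max_of_lt_left hK, ?_⟩
  intro γ hγ ξ hξ
  have hξ2 : ξ / 2 ∈ Icc (0 : ℝ) 1 := ⟨by linarith [hξ.1], by linarith [hξ.2]⟩
  have hmono : γ (ξ / 2) ≤ γ ξ := hγ.strictMonoOn.monotoneOn hξ2 hξ (by linarith [hξ.1])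
  have h0 := (hγ.mem_Icc hξ2).1
  have hη0 := eta_nonneg (N := N) h0
  rw [hγ.integral_eta_rpow_neg hm hξ]
  refine ⟨⟨?_, ?_⟩, ⟨?_, ?_⟩, ?_, ?_, ?_⟩
  · exact (mul_le_of_le_one_left h0 (min_le_left _ _)).trans hmono
  · exact (hγ.le_mul_half hm hξ).trans (mul_le_mul_of_nonneg_right (le_max_left _ _) h0)
  · exact (mul_le_of_le_one_left hη0 (min_le_left _ _)).trans
      (eta_monotoneOn (hγ.mem_Icc hξ2).1 (hγ.mem_Icc hξ).1 hmono)
  · exact (hγ.eta_le_mul_half hm hξ).trans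
      (mul_le_mul_of_nonneg_right (le_max_of_le_right (le_max_left _ _)) hη0)
  · exact le_trans (mul_le_mul_of_nonneg_right ((min_le_right _ _).trans (min_le_left _ _))
      (rpow_nonneg hξ.1 _)) (hγ.rpow_mul_rpow_le_eta (by omega) hm hξ)
  · exact (mul_le_mul_of_nonneg_right ((min_le_right _ _).trans (min_le_right _ _))
      (sq_nonneg (γ ξ))).trans_eq (one_div_mul_eq_div _ _)
  · exact (one_div_mul_eq_div _ _).symm.trans_le
      (mul_le_mul_of_nonneg_right (le_max_of_le_right (le_max_right _ _)) (sq_nonneg (γ ξ)))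
end
end
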